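/- Soundness of the ∇elim rule: if σ does not trivialize clause C, then any model satisfying both ∇ε⃗ ∇(σ ≔ Q) C and ∇ε⃗ ∇(σ ≔ Q) (C|σ) also satisfies ∇ε⃗ (C|σ). -/
import Mathlib


inductive Atom (V : Type) where
  | tru : Atom V
  | fls : Atom V
  | lit : V → Bool → Atom V
deriving DecidableEq

def Atom.compl {V : Type} : Atom V → Atom V
  | .tru => .fls
  | .fls => .tru
  | .lit v b => .lit v (!b)

/-- A literal: a variable together with a polarity. -/
abbrev Lit (V : Type) := V × Bool

def Lit.neg {V : Type} (l : Lit V) : Lit V := (l.1, !l.2)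

/-- A model is determined by a total assignment to the variables. -/
abbrev Model (V : Type) := V → Bool

def evalAtom {V : Type} (I : Model V) : Atom V → Bool
  | .tru => true
  | .fls => false
  | .lit v b => I v == b

/-- A substitution maps each variable to an atom (extended to atoms/literals below). -/
abbrev Subst (V : Type) := V → Atom V

/-- Atomicity: only finitely many variables are moved. -/
def Subst.IsAtomic {V : Type} (σ : Subst V) : Prop :=
  {v : V | σ v ≠ Atom.lit v true}.Finite

def idSub (V : Type) : Subst V := fun v => Atom.lit v true

/-- Apply a substitution to a literal, yielding an atom. -/
def subLit {V : Type} (σ : Subst V) (l : Lit V) : Atom V :=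
  if l.2 then σ l.1 else (σ l.1).compl

/-- The composed model `I ∘ σ`. -/
def compModel {V : Type} (I : Model V) (σ : Subst V) : Model V :=
  fun v => evalAtom I (σ v)

def satLit {V : Type} (I : Model V) (l : Lit V) : Prop := I l.1 = l.2

/-- A clause: a finite set of literals (disjunctive reading). -/
abbrev Clause (V : Type) := Finset (Lit V)

/-- Non-tautological: no complementary pair of literals. -/
def Clause.Nontaut {V : Type} (C : Clause V) : Prop :=
  ∀ v : V, ¬ ((v, true) ∈ C ∧ (v, false) ∈ C)

def satClause {V : Type} (I : Model V) (C : Clause V) : Prop :=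
  ∃ l ∈ C, satLit I l

/-- `I` falsifies `C`, i.e. satisfies the cube `¬C`. -/
def falsifiesClause {V : Type} (I : Model V) (C : Clause V) : Prop :=
  ∀ l ∈ C, satLit I (Lit.neg l)

/-- A cube is a finite set of literals read conjunctively. -/
def satCube {V : Type} (I : Model V) (Q : Finset (Lit V)) : Prop :=
  ∀ l ∈ Q, satLit I l

/-- `σ` trivializes `C`: some literal is mapped to ⊤, or two literals are mapped
to complementary atoms. -/
def Trivializes {V : Type} (σ : Subst V) (C : Clause V) : Prop :=
  (∃ l ∈ C, subLit σ l = Atom.tru) ∨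
    (∃ l ∈ C, ∃ k ∈ C, subLit σ l = (subLit σ k).compl)

/-- The reduct `C|σ`: images of the literals of `C` that remain literals
(in particular atoms mapped to ⊥ are dropped). -/
def reduct {V : Type} (σ : Subst V) (C : Clause V) : Set (Lit V) :=
  {m | ∃ l ∈ C, subLit σ l = Atom.lit m.1 m.2}

/-- Disjunctive satisfaction of a (possibly infinite) set of literals. -/
def satLitSet {V : Type} (I : Model V) (S : Set (Lit V)) : Prop :=
  ∃ l ∈ S, satLit I l

/-- A CNF formula: a finite set of clauses. -/
abbrev CNF (V : Type) := Finset (Clause V)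

def satCNF {V : Type} (I : Model V) (F : CNF V) : Prop :=
  ∀ C ∈ F, satClause I C

open Classical in
/-- Conditional mutation of a model: apply `σ` if the trigger `T` holds. -/
noncomputable def mutate {V : Type} (I : Model V) (σ : Subst V) (T : Prop) : Model V :=
  if T then compModel I σ else I

/-- A cubic mutation rule `(σ ≔ Q)`. -/
structure MutRule (V : Type) where
  eff : Subst V
  trig : Finset (Lit V)

noncomputable def applyRule {V : Type} (I : Model V) (ε : MutRule V) : Model V :=
  mutate I ε.eff (satCube I ε.trig)

/-- Apply a sequence of cubic mutation rules `ε₁, …, εₙ` (left to right). -/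
noncomputable def applyRules {V : Type} (I : Model V) : List (MutRule V) → Model V
  | [] => I
  | ε :: εs => applyRules (applyRule I ε) εs

/-- SR clause (entailment version of the RUP condition). -/
def IsSR {V : Type} (F : CNF V) (C : Clause V) (σ : Subst V) : Prop :=
  Trivializes σ C ∧
    ∀ D ∈ F, Trivializes σ D ∨
      (∀ I : Model V, falsifiesClause I C → satLitSet I (reduct σ D)) ∨
      (∀ I : Model V, satCNF I F → satClause I C ∨ satLitSet I (reduct σ D))

/-- WSR clause upon `σ` modulo `Δ` (entailment version of the RUP condition). -/
def IsWSR {V : Type} [DecidableEq V] (F : CNF V) (C : Clause V) (σ : Subst V)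
    (Δ : CNF V) : Prop :=
  ∀ D ∈ (F \ Δ) ∪ {C}, Trivializes σ D ∨
    (∀ I : Model V, falsifiesClause I C → satLitSet I (reduct σ D)) ∨
    (∀ I : Model V, satCNF I F → satClause I C ∨ satLitSet I (reduct σ D))

/-- The substitution `Q*` associated with a cube `Q`. -/
def cubeStar {V : Type} [DecidableEq V] (Q : Finset (Lit V)) : Subst V := fun v =>
  if (v, true) ∈ Q then Atom.tru
  else if (v, false) ∈ Q then Atom.fls
  else Atom.lit v true

/-- Pigeonhole variables: `(i, j)` means "pigeon i is in hole j". -/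
def Hcl (i n : ℕ) : Clause (ℕ × ℕ) :=
  (Finset.Ico 1 n).image fun j => ((i, j), true)

def Pcl (i j k : ℕ) : Clause (ℕ × ℕ) :=
  {((i, k), false), ((j, k), false)}

/-- The pigeonhole formula Πₙ. -/
def PHP (n : ℕ) : CNF (ℕ × ℕ) :=
  ((Finset.Icc 1 n).image fun i => Hcl i n) ∪
    ((((Finset.Icc 1 n ×ˢ Finset.Icc 1 n) ×ˢ Finset.Ico 1 n).filter
        fun t => t.1.1 < t.1.2).image fun t => Pcl t.1.1 t.1.2 t.2)

def Rcl (i n : ℕ) : Clause (ℕ × ℕ) := {((i, n - 1), false)}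

/-- The pigeon-swap substitution σᵢₙ, swapping `p i j` with `p n j` for `1 ≤ j < n`. -/
def swapSub (i n : ℕ) : Subst (ℕ × ℕ) := fun p =>
  if p.1 = i ∧ 1 ≤ p.2 ∧ p.2 < n then Atom.lit (n, p.2) true
  else if p.1 = n ∧ 1 ≤ p.2 ∧ p.2 < n then Atom.lit (i, p.2) true
  else Atom.lit p true

/-- soundness of ∇elim.  If `σ` does not trivialize `C`, a model satisfying
`∇ε⃗ ∇(σ ≔ Q) C` and `∇ε⃗ ∇(σ ≔ Q) (C|σ)` also satisfies `∇ε⃗ (C|σ)`. -/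
theorem nabla_elim_sound {V : Type} (C : Clause V) (σ : Subst V) (Q : Finset (Lit V))
    (hσ : Subst.IsAtomic σ) (h : ¬ Trivializes σ C) (εs : List (MutRule V))
    (I : Model V)
    (h1 : satClause (applyRule (applyRules I εs) ⟨σ, Q⟩) C)
    (h2 : satLitSet (applyRule (applyRules I εs) ⟨σ, Q⟩) (reduct σ C)) :
    satLitSet (applyRules I εs) (reduct σ C) := by
  set J := applyRules I εs with hJ
  by_cases hT : satCube J Q
  · -- triggered: the mutated model is `compModel J σ`, use h1
    have hrule : applyRule J ⟨σ, Q⟩ = compModel J σ := by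
      simp [applyRule, mutate, hT]
    rw [hrule] at h1
    obtain ⟨l, hlC, hl⟩ := h1
    have hl' : evalAtom J (σ l.1) = l.2 := hl
    cases hσl : σ l.1 with
    | tru =>
      exfalso; apply h; left
      refine ⟨l, hlC, ?_⟩
      have : l.2 = true := by rw [hσl] at hl'; simpa [evalAtom] using hl'.symm
      simp [subLit, this, hσl]
    | fls =>
      exfalso; apply h; left
      refine ⟨l, hlC, ?_⟩
      have : l.2 = false := by rw [hσl] at hl'; simpa [evalAtom] using hl'.symm
      simp [subLit, this, hσl, Atom.compl]
    | lit v b =>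
      rw [hσl] at hl'
      simp only [evalAtom] at hl'
      cases hl2 : l.2 with
      | true =>
        refine ⟨(v, b), ⟨l, hlC, by simp [subLit, hl2, hσl]⟩, ?_⟩
        have : (J v == b) = true := by rw [hl'] ; exact hl2
        simpa [satLit] using this
      | false =>
        refine ⟨(v, !b), ⟨l, hlC, by simp [subLit, hl2, hσl, Atom.compl]⟩, ?_⟩
        have : (J v == b) = false := by rw [hl']; exact hl2
        have : J v ≠ b := by simpa using this
        simp [satLit]
        cases b <;> cases hv : J v <;> simp_all
  · -- not triggered: the rule is identity, use h2
    have hrule : applyRule J ⟨σ, Q⟩ = J := by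
      simp [applyRule, mutate, hT]
    rwa [hrule] at h2
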